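/- arXiv:2112.08099 — 2 statements merged into one kernel-verified Lean document; each statement's English description precedes it below -/
import Mathlib

section
/- For a fixed degraded channel cascade X → Y → Z with finite alphabets, the function Γ[R] = max{ I(X;Y) − I(X;Z) : P_X with I(X;Y) ≥ R } is concave in R on the interval where it is defined. -/
open Finset

section IT
variable {Ω : Type} [Fintype Ω]

/-- Probability that random variable `X` takes the value `x` under pmf `p`. -/
def pm {α : Type} [Fintype α] [DecidableEq α] (p : Ω → ℝ) (X : Ω → α) (x : α) : ℝ :=
  ∑ ω, if X ω = x then p ω else 0

/-- Shannon entropy (in bits) of random variable `X` under pmf `p`. -/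
noncomputable def ent {α : Type} [Fintype α] [DecidableEq α] (p : Ω → ℝ) (X : Ω → α) : ℝ :=
  -∑ x, pm p X x * Real.logb 2 (pm p X x)

/-- Mutual information `I(X;Y)` (in bits). -/
noncomputable def mi {α β : Type} [Fintype α] [DecidableEq α] [Fintype β] [DecidableEq β]
    (p : Ω → ℝ) (X : Ω → α) (Y : Ω → β) : ℝ :=
  ent p X + ent p Y - ent p (fun ω => (X ω, Y ω))

/-- Conditional entropy `H(X | Y)` (in bits). -/
noncomputable def condEnt {α β : Type} [Fintype α] [DecidableEq α] [Fintype β] [DecidableEq β]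
    (p : Ω → ℝ) (X : Ω → α) (Y : Ω → β) : ℝ :=
  ent p (fun ω => (X ω, Y ω)) - ent p Y

/-- Conditional mutual information `I(X;Y | Z)` (in bits). -/
noncomputable def cmi {α β γ : Type} [Fintype α] [DecidableEq α] [Fintype β] [DecidableEq β]
    [Fintype γ] [DecidableEq γ] (p : Ω → ℝ) (X : Ω → α) (Y : Ω → β) (Z : Ω → γ) : ℝ :=
  ent p (fun ω => (X ω, Z ω)) + ent p (fun ω => (Y ω, Z ω))
    - ent p (fun ω => (X ω, Y ω, Z ω)) - ent p Z

/-- `p` is a probability mass function on the finite sample space `Ω`. -/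
def IsPMF (p : Ω → ℝ) : Prop := (∀ ω, 0 ≤ p ω) ∧ ∑ ω, p ω = 1

/-- `X` and `Z` are conditionally independent given `Y` (i.e. `X → Y → Z` is a Markov chain). -/
def CondIndep {α β γ : Type} [Fintype α] [DecidableEq α] [Fintype β] [DecidableEq β]
    [Fintype γ] [DecidableEq γ] (p : Ω → ℝ) (X : Ω → α) (Z : Ω → γ) (Y : Ω → β) : Prop :=
  ∀ x z y, pm p (fun ω => (X ω, Z ω, Y ω)) (x, z, y) * pm p Y y =
    pm p (fun ω => (X ω, Y ω)) (x, y) * pm p (fun ω => (Z ω, Y ω)) (z, y)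

end IT

section Wyner
variable {χ γ ζ : Type} [Fintype χ] [DecidableEq χ] [Fintype γ] [DecidableEq γ]
  [Fintype ζ] [DecidableEq ζ]

/-- `P` is a probability distribution on the finite alphabet `α`. -/
def IsDist {α : Type} [Fintype α] (P : α → ℝ) : Prop := (∀ a, 0 ≤ P a) ∧ ∑ a, P a = 1

/-- Joint distribution `P_X(x)·Q_M(y|x)·Q_W(z|y)` of the degraded cascade `X → Y → Z`. -/
noncomputable def jointP (P : χ → ℝ) (QM : χ → γ → ℝ) (QW : γ → ζ → ℝ) : χ × γ × ζ → ℝ :=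
  fun w => P w.1 * QM w.1 w.2.1 * QW w.2.1 w.2.2

/-- `I(X;Y)` under input distribution `P`. -/
noncomputable def miXY (P : χ → ℝ) (QM : χ → γ → ℝ) (QW : γ → ζ → ℝ) : ℝ :=
  mi (jointP P QM QW) (fun w => w.1) (fun w => w.2.1)

/-- `I(X;Z)` under input distribution `P`. -/
noncomputable def miXZ (P : χ → ℝ) (QM : χ → γ → ℝ) (QW : γ → ζ → ℝ) : ℝ :=
  mi (jointP P QM QW) (fun w => w.1) (fun w => w.2.2)

/-- The constraint set of Wyner's function: values `I(X;Y) − I(X;Z)` over input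
distributions `P_X` with `I(X;Y) ≥ R`. -/
def GammaSet (QM : χ → γ → ℝ) (QW : γ → ζ → ℝ) (R : ℝ) : Set ℝ :=
  {v | ∃ P : χ → ℝ, IsDist P ∧ miXY P QM QW ≥ R ∧ v = miXY P QM QW - miXZ P QM QW}

/-- Wyner's function `Γ[R] = max{I(X;Y) − I(X;Z) : I(X;Y) ≥ R}`. -/
noncomputable def Gamma (QM : χ → γ → ℝ) (QW : γ → ζ → ℝ) (R : ℝ) : ℝ :=
  sSup (GammaSet QM QW R)

end Wyner

/-! The proof is time sharing between input distributions. Both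
`I(X;Y) = H(Y) - ∑ₓ P(x) H(Y | X = x)` and
`I(X;Y) - I(X;Z) = (H(Y) - H(Z)) - ∑ₓ P(x) (H(Y | X = x) - H(Z | X = x))`
are a concave function of the output law `P ᵥ* QM` minus a term linear in `P`. For the second
this is the concavity of `q ↦ H(q) - H(q ᵥ* QW)`: the concavity defect of `H` at a mixture is a
mixture of relative entropies to the mixture, and the channel `QW` can only shrink each of them
(data processing, from the log-sum inequality). So the mixture of inputs feasible for `R₁` and
`R₂` is feasible for `λ R₁ + (1 - λ) R₂` and does at least as well as the mixed values. -/

open Real in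
lemma sum_mul_log_div_sum_le {ι : Type} (s : Finset ι) {a b : ι → ℝ} (ha : ∀ i, 0 ≤ a i)
    (hb : ∀ i, 0 ≤ b i) (hab : ∀ i, b i = 0 → a i = 0) :
    (∑ i ∈ s, a i) * log ((∑ i ∈ s, a i) / ∑ i ∈ s, b i) ≤ ∑ i ∈ s, a i * log (a i / b i) := by
  rcases (Finset.sum_nonneg fun i _ => hb i : 0 ≤ ∑ i ∈ s, b i).eq_or_lt with hB | hB
  · have ha0 : ∀ i ∈ s, a i = 0 := fun i hi =>
      hab i ((Finset.sum_eq_zero_iff_of_nonneg fun i _ => hb i).1 hB.symm i hi)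
    simp +contextual [ha0]
  generalize hBdef : ∑ i ∈ s, b i = B at hB ⊢
  -- Jensen for `x ↦ x log x` with weights `b i / B` at the points `a i / b i`
  have hweight : ∀ i, b i / B * (a i / b i) = a i / B := fun i => by
    rcases eq_or_ne (b i) 0 with h | h
    · simp [h, hab i h]
    · field_simp
  have hjensen := convexOn_mul_log.map_sum_le (t := s) (w := fun i => b i / B)
    (p := fun i => a i / b i) (fun i _ => div_nonneg (hb i) hB.le)
    (by rw [← Finset.sum_div, hBdef, div_self hB.ne']) (fun i _ => div_nonneg (ha i) (hb i))
  simp only [smul_eq_mul, ← mul_assoc, hweight] at hjensen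
  simp only [div_mul_eq_mul_div, ← Finset.sum_div] at hjensen
  rwa [div_le_div_iff_of_pos_right hB] at hjensen

section Entropy

open Real Matrix

variable {ι κ : Type} [Fintype ι]

noncomputable def entropy (q : ι → ℝ) : ℝ := ∑ i, negMulLog (q i)

noncomputable def relEntropy (p q : ι → ℝ) : ℝ := ∑ i, p i * log (p i / q i)

lemma Matrix.vecMul_nonneg {p : ι → ℝ} {W : Matrix ι κ ℝ} (hp : 0 ≤ p)
    (hW : ∀ i k, 0 ≤ W i k) : 0 ≤ p ᵥ* W :=
  fun k => Finset.sum_nonneg fun i _ => mul_nonneg (hp i) (hW i k)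

lemma concaveOn_entropy : ConcaveOn ℝ (Set.Ici 0) (entropy : (ι → ℝ) → ℝ) := by
  refine ⟨convex_Ici 0, fun q₁ h₁ q₂ h₂ a b ha hb hab => ?_⟩
  simp only [entropy, smul_eq_mul, Finset.mul_sum, ← Finset.sum_add_distrib]
  exact Finset.sum_le_sum fun i _ => concaveOn_negMulLog.2 (h₁ i) (h₂ i) ha hb hab

lemma relEntropy_vecMul_le {p q : ι → ℝ} {W : Matrix ι κ ℝ} [Fintype κ] (hp : 0 ≤ p)
    (hq : 0 ≤ q) (hW : ∀ i, IsDist (W i)) (hpq : ∀ i, q i = 0 → p i = 0) :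
    relEntropy (p ᵥ* W) (q ᵥ* W) ≤ relEntropy p q := by
  calc relEntropy (p ᵥ* W) (q ᵥ* W)
      ≤ ∑ k, ∑ i, p i * W i k * log (p i * W i k / (q i * W i k)) :=
        Finset.sum_le_sum fun k _ => sum_mul_log_div_sum_le _
          (fun i => mul_nonneg (hp i) ((hW i).1 k)) (fun i => mul_nonneg (hq i) ((hW i).1 k))
          (fun i h => by rcases mul_eq_zero.1 h with h | h <;> simp [h, hpq])
    _ = ∑ i, (∑ k, W i k) * (p i * log (p i / q i)) := by
        rw [Finset.sum_comm]
        refine Finset.sum_congr rfl fun i _ => ?_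
        rw [Finset.sum_mul]
        refine Finset.sum_congr rfl fun k _ => ?_
        rcases eq_or_ne (W i k) 0 with h | h
        · simp [h]
        · rw [mul_div_mul_right _ _ h]; ring
    _ = relEntropy p q := by simp only [(hW _).2, one_mul, relEntropy]

lemma negMulLog_mul_add_mul {a b x y : ℝ} (ha : 0 ≤ a) (hb : 0 ≤ b) (hx : 0 ≤ x) (hy : 0 ≤ y) :
    negMulLog (a * x + b * y) = a * negMulLog x + b * negMulLog y
      + (a * (x * log (x / (a * x + b * y))) + b * (y * log (y / (a * x + b * y)))) := by
  rcases eq_or_ne (a * x + b * y) 0 with h | h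
  · obtain ⟨hax, hby⟩ := (add_eq_zero_iff_of_nonneg (mul_nonneg ha hx) (mul_nonneg hb hy)).1 h
    rcases mul_eq_zero.1 hax with rfl | rfl <;> rcases mul_eq_zero.1 hby with rfl | rfl <;> simp
  · have hlog : ∀ t : ℝ, t * log (t / (a * x + b * y)) = t * log t - t * log (a * x + b * y) := by
      intro t
      rcases eq_or_ne t 0 with rfl | ht
      · simp
      · rw [log_div ht h]; ring
    simp only [negMulLog, hlog]
    ring

lemma entropy_smul_add_smul {q₁ q₂ : ι → ℝ} {a b : ℝ} (ha : 0 ≤ a) (hb : 0 ≤ b)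
    (h₁ : 0 ≤ q₁) (h₂ : 0 ≤ q₂) :
    entropy (a • q₁ + b • q₂) = a * entropy q₁ + b * entropy q₂
      + (a * relEntropy q₁ (a • q₁ + b • q₂) + b * relEntropy q₂ (a • q₁ + b • q₂)) := by
  simp only [entropy, relEntropy, Pi.add_apply, Pi.smul_apply, smul_eq_mul,
    negMulLog_mul_add_mul ha hb (h₁ _) (h₂ _), Finset.sum_add_distrib, Finset.mul_sum]

lemma concaveOn_entropy_sub_entropy_vecMul [Fintype κ] {W : Matrix ι κ ℝ}
    (hW : ∀ i, IsDist (W i)) :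
    ConcaveOn ℝ (Set.Ici 0) fun q : ι → ℝ => entropy q - entropy (q ᵥ* W) := by
  refine concaveOn_iff_forall_pos.2 ⟨convex_Ici 0, fun q₁ h₁ q₂ h₂ a b ha hb _ => ?_⟩
  have hW₀ : ∀ i k, 0 ≤ W i k := fun i k => (hW i).1 k
  have hq : 0 ≤ a • q₁ + b • q₂ := add_nonneg (smul_nonneg ha.le h₁) (smul_nonneg hb.le h₂)
  have hsupp : ∀ i, (a • q₁ + b • q₂) i = 0 → a * q₁ i = 0 ∧ b * q₂ i = 0 := fun i =>
    (add_eq_zero_iff_of_nonneg (mul_nonneg ha.le (h₁ i)) (mul_nonneg hb.le (h₂ i))).1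
  have hdpi₁ := relEntropy_vecMul_le h₁ hq hW fun i h =>
    (mul_eq_zero.1 (hsupp i h).1).resolve_left ha.ne'
  have hdpi₂ := relEntropy_vecMul_le h₂ hq hW fun i h =>
    (mul_eq_zero.1 (hsupp i h).2).resolve_left hb.ne'
  rw [add_vecMul, smul_vecMul, smul_vecMul] at hdpi₁ hdpi₂ ⊢
  rw [entropy_smul_add_smul ha.le hb.le h₁ h₂,
    entropy_smul_add_smul ha.le hb.le (vecMul_nonneg h₁ hW₀) (vecMul_nonneg h₂ hW₀)]
  simp only [smul_eq_mul]
  linarith [mul_le_mul_of_nonneg_left hdpi₁ ha.le, mul_le_mul_of_nonneg_left hdpi₂ hb.le]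

lemma ConcaveOn.comp_vecMul_sub_sum {φ : (κ → ℝ) → ℝ} (hφ : ConcaveOn ℝ (Set.Ici 0) φ)
    {Q : Matrix ι κ ℝ} (hQ : ∀ i k, 0 ≤ Q i k) :
    ConcaveOn ℝ (Set.Ici 0) fun P : ι → ℝ => φ (P ᵥ* Q) - ∑ i, P i * φ (Q i) := by
  have hcomp := (hφ.comp_linearMap (vecMulLinear Q)).subset (s := Set.Ici 0)
    (fun _ hP => vecMul_nonneg hP hQ) (convex_Ici 0)
  exact hcomp.sub ((Fintype.linearCombination ℝ fun i => φ (Q i)).convexOn (convex_Ici 0))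

lemma isDist_vecMul {p : ι → ℝ} {W : Matrix ι κ ℝ} [Fintype κ] (hp : IsDist p)
    (hW : ∀ i, IsDist (W i)) : IsDist (p ᵥ* W) := by
  refine ⟨vecMul_nonneg hp.1 fun i k => (hW i).1 k, ?_⟩
  simp only [vecMul, dotProduct]
  rw [Finset.sum_comm]
  simp only [← Finset.mul_sum, (hW _).2, mul_one, hp.2]

@[fun_prop]
lemma continuous_entropy : Continuous (entropy : (ι → ℝ) → ℝ) :=
  continuous_finsetSum _ fun i _ => continuous_negMulLog.comp (continuous_apply i)

lemma entropy_compProd [Fintype κ] (u : ι → ℝ) {v : ι → κ → ℝ} (hv : ∀ i, ∑ k, v i k = 1) :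
    entropy (fun ik : ι × κ => u ik.1 * v ik.1 ik.2) = entropy u + ∑ i, u i * entropy (v i) := by
  simp only [entropy, Fintype.sum_prod_type, negMulLog_mul, Finset.sum_add_distrib,
    ← Finset.sum_mul, ← Finset.mul_sum, hv, one_mul]

end Entropy

section ValueFunction

variable {E : Type*} [AddCommGroup E] [Module ℝ E] {C : Set E} {f g : E → ℝ}

lemma concaveOn_sSup_image_superlevel (hf : ConcaveOn ℝ C f) (hg : ConcaveOn ℝ C g)
    (hbdd : BddAbove (f '' C)) :
    ConcaveOn ℝ {R | (f '' {x ∈ C | R ≤ g x}).Nonempty}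
      fun R => sSup (f '' {x ∈ C | R ≤ g x}) := by
  have hmix : ∀ ⦃R₁ R₂ : ℝ⦄ ⦃x₁ x₂ : E⦄ ⦃a b : ℝ⦄, x₁ ∈ {x ∈ C | R₁ ≤ g x} →
      x₂ ∈ {x ∈ C | R₂ ≤ g x} → 0 ≤ a → 0 ≤ b → a + b = 1 →
      a • x₁ + b • x₂ ∈ {x ∈ C | a • R₁ + b • R₂ ≤ g x} ∧
        a • f x₁ + b • f x₂ ≤ f (a • x₁ + b • x₂) := by
    intro R₁ R₂ x₁ x₂ a b hx₁ hx₂ ha hb hab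
    refine ⟨⟨hf.1 hx₁.1 hx₂.1 ha hb hab, ?_⟩, hf.2 hx₁.1 hx₂.1 ha hb hab⟩
    exact (add_le_add (smul_le_smul_of_nonneg_left hx₁.2 ha)
      (smul_le_smul_of_nonneg_left hx₂.2 hb)).trans (hg.2 hx₁.1 hx₂.1 ha hb hab)
  have hbdd' : ∀ R, BddAbove (f '' {x ∈ C | R ≤ g x}) := fun R =>
    hbdd.mono (Set.image_mono (Set.sep_subset _ _))
  refine ⟨?_, ?_⟩
  · rintro R₁ ⟨_, x₁, hx₁, rfl⟩ R₂ ⟨_, x₂, hx₂, rfl⟩ a b ha hb hab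
    exact ⟨_, Set.mem_image_of_mem f (hmix hx₁ hx₂ ha hb hab).1⟩
  · intro R₁ h₁ R₂ h₂ a b ha hb hab
    dsimp only
    rw [← Real.sSup_smul_of_nonneg ha, ← Real.sSup_smul_of_nonneg hb,
      ← csSup_add h₁.smul_set ((hbdd' R₁).smul_of_nonneg ha) h₂.smul_set
        ((hbdd' R₂).smul_of_nonneg hb)]
    refine csSup_le (h₁.smul_set.add h₂.smul_set) ?_
    rintro _ ⟨_, ⟨_, ⟨x₁, hx₁, rfl⟩, rfl⟩, _, ⟨_, ⟨x₂, hx₂, rfl⟩, rfl⟩, rfl⟩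
    obtain ⟨hmem, hle⟩ := hmix hx₁ hx₂ ha hb hab
    exact hle.trans (le_csSup (hbdd' _) (Set.mem_image_of_mem f hmem))

end ValueFunction

section Cascade

open Real Matrix

variable {χ γ ζ : Type} [Fintype χ] [Fintype γ] [Fintype ζ] (P : χ → ℝ) {QM : χ → γ → ℝ}
  {QW : γ → ζ → ℝ}

lemma ent_eq_entropy_div {Ω α : Type} [Fintype Ω] [Fintype α] [DecidableEq α] (p : Ω → ℝ)
    (X : Ω → α) : ent p X = entropy (pm p X) / log 2 := by
  simp only [ent, entropy, negMulLog, logb, Finset.sum_div, ← Finset.sum_neg_distrib]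
  exact Finset.sum_congr rfl fun _ _ => by ring

lemma pm_jointP_X [DecidableEq χ] (hQM : ∀ x, IsDist (QM x)) (hQW : ∀ y, IsDist (QW y)) :
    pm (jointP P QM QW) (fun w => w.1) = P := by
  ext x
  simp [pm, jointP, Fintype.sum_prod_type, ← Finset.mul_sum, (hQW _).2, (hQM _).2]

lemma pm_jointP_Y [DecidableEq γ] (hQW : ∀ y, IsDist (QW y)) :
    pm (jointP P QM QW) (fun w => w.2.1) = P ᵥ* QM := by
  ext y
  simp [pm, jointP, Fintype.sum_prod_type, ← Finset.mul_sum, (hQW _).2, vecMul, dotProduct]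

lemma pm_jointP_XY [DecidableEq χ] [DecidableEq γ] (hQW : ∀ y, IsDist (QW y)) :
    pm (jointP P QM QW) (fun w => (w.1, w.2.1)) = fun xy => P xy.1 * QM xy.1 xy.2 := by
  ext ⟨x, y⟩
  simp [pm, jointP, Fintype.sum_prod_type, ← Finset.mul_sum, (hQW _).2, ite_and]

lemma pm_jointP_Z [DecidableEq ζ] : pm (jointP P QM QW) (fun w => w.2.2) = P ᵥ* QM ᵥ* QW := by
  ext z
  simp only [pm, jointP, mul_assoc, Fintype.sum_prod_type, sum_ite_eq', mem_univ, ↓reduceIte,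
    vecMul, dotProduct, sum_mul]
  exact Finset.sum_comm

lemma pm_jointP_XZ [DecidableEq χ] [DecidableEq ζ] :
    pm (jointP P QM QW) (fun w => (w.1, w.2.2)) = fun xz => P xz.1 * (QM xz.1 ᵥ* QW) xz.2 := by
  ext ⟨x, z⟩
  simp [pm, jointP, Fintype.sum_prod_type, ite_and, vecMul, dotProduct, Finset.mul_sum, mul_assoc]

lemma miXY_eq [DecidableEq χ] [DecidableEq γ] (hQM : ∀ x, IsDist (QM x))
    (hQW : ∀ y, IsDist (QW y)) :
    miXY P QM QW = (entropy (P ᵥ* QM) - ∑ x, P x * entropy (QM x)) / log 2 := by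
  rw [miXY, mi, ent_eq_entropy_div, ent_eq_entropy_div, ent_eq_entropy_div,
    pm_jointP_X P hQM hQW, pm_jointP_Y P hQW, pm_jointP_XY P hQW,
    entropy_compProd P fun x => (hQM x).2]
  ring

lemma miXZ_eq [DecidableEq χ] [DecidableEq ζ] (hQM : ∀ x, IsDist (QM x))
    (hQW : ∀ y, IsDist (QW y)) :
    miXZ P QM QW = (entropy (P ᵥ* QM ᵥ* QW) - ∑ x, P x * entropy (QM x ᵥ* QW)) / log 2 := by
  rw [miXZ, mi, ent_eq_entropy_div, ent_eq_entropy_div, ent_eq_entropy_div,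
    pm_jointP_X P hQM hQW, pm_jointP_Z, pm_jointP_XZ,
    entropy_compProd P fun x => (isDist_vecMul (hQM x) hQW).2]
  ring

lemma miXY_sub_miXZ_eq [DecidableEq χ] [DecidableEq γ] [DecidableEq ζ]
    (hQM : ∀ x, IsDist (QM x)) (hQW : ∀ y, IsDist (QW y)) :
    miXY P QM QW - miXZ P QM QW = ((entropy (P ᵥ* QM) - entropy (P ᵥ* QM ᵥ* QW))
      - ∑ x, P x * (entropy (QM x) - entropy (QM x ᵥ* QW))) / log 2 := by
  rw [miXY_eq P hQM hQW, miXZ_eq P hQM hQW]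
  simp only [mul_sub, Finset.sum_sub_distrib]
  ring

lemma concaveOn_miXY [DecidableEq χ] [DecidableEq γ] (hQM : ∀ x, IsDist (QM x))
    (hQW : ∀ y, IsDist (QW y)) : ConcaveOn ℝ (Set.Ici 0) fun P => miXY P QM QW :=
  ((concaveOn_entropy.comp_vecMul_sub_sum fun x y => (hQM x).1 y).smul
    (inv_nonneg.2 (log_nonneg one_le_two))).congr fun P _ => by
      simp [miXY_eq P hQM hQW, div_eq_inv_mul]

lemma concaveOn_miXY_sub_miXZ [DecidableEq χ] [DecidableEq γ] [DecidableEq ζ]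
    (hQM : ∀ x, IsDist (QM x)) (hQW : ∀ y, IsDist (QW y)) :
    ConcaveOn ℝ (Set.Ici 0) fun P => miXY P QM QW - miXZ P QM QW :=
  (((concaveOn_entropy_sub_entropy_vecMul hQW).comp_vecMul_sub_sum fun x y => (hQM x).1 y).smul
    (inv_nonneg.2 (log_nonneg one_le_two))).congr fun P _ => by
      simp [miXY_sub_miXZ_eq P hQM hQW, div_eq_inv_mul]

lemma bddAbove_miXY_sub_miXZ [DecidableEq χ] [DecidableEq γ] [DecidableEq ζ]
    (hQM : ∀ x, IsDist (QM x)) (hQW : ∀ y, IsDist (QW y)) :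
    BddAbove ((fun P => miXY P QM QW - miXZ P QM QW) '' stdSimplex ℝ χ) := by
  refine (isCompact_stdSimplex ℝ χ).bddAbove_image (Continuous.continuousOn ?_)
  simp only [miXY_sub_miXZ_eq _ hQM hQW]
  fun_prop

lemma gammaSet_eq_image [DecidableEq χ] [DecidableEq γ] [DecidableEq ζ] (R : ℝ) :
    GammaSet QM QW R = (fun P => miXY P QM QW - miXZ P QM QW) ''
      {P ∈ stdSimplex ℝ χ | R ≤ miXY P QM QW} := by
  ext v
  simp [GammaSet, IsDist, stdSimplex, eq_comm, and_assoc]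

end Cascade

/-- Wyner's function `Γ[R]` is concave on the interval where it is defined
(Lemma 1 of Wyner 1975). -/
theorem stmt5 {χ γ ζ : Type} [Fintype χ] [DecidableEq χ] [Fintype γ] [DecidableEq γ]
    [Fintype ζ] [DecidableEq ζ]
    (QM : χ → γ → ℝ) (QW : γ → ζ → ℝ)
    (hQM : ∀ x, IsDist (QM x)) (hQW : ∀ y, IsDist (QW y))
    (R₁ R₂ lam : ℝ) (hlam0 : 0 ≤ lam) (hlam1 : lam ≤ 1)
    (h1 : (GammaSet QM QW R₁).Nonempty) (h2 : (GammaSet QM QW R₂).Nonempty) :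
    Gamma QM QW (lam * R₁ + (1 - lam) * R₂)
      ≥ lam * Gamma QM QW R₁ + (1 - lam) * Gamma QM QW R₂ := by
  have hsimplex : stdSimplex ℝ χ ⊆ Set.Ici 0 := fun P hP => hP.1
  have hconcave := concaveOn_sSup_image_superlevel
    ((concaveOn_miXY_sub_miXZ hQM hQW).subset hsimplex (convex_stdSimplex ℝ χ))
    ((concaveOn_miXY hQM hQW).subset hsimplex (convex_stdSimplex ℝ χ))
    (bddAbove_miXY_sub_miXZ hQM hQW)
  rw [gammaSet_eq_image] at h1 h2
  simp only [Gamma, gammaSet_eq_image]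
  simpa only [smul_eq_mul] using hconcave.2 h1 h2 hlam0 (sub_nonneg.2 hlam1) (by ring)
end

section
/- Secrecy converse core inequality: let U, X, Y, Z, S be finitely-valued random variables with U → X → Y → Z a Markov chain, S taking values in a set of size q_d, and H(U | Y, Z, S) ≤ Δ. Then H(U) − I(U; Z) ≤ I(X; Y | Z) + log₂ q_d + Δ. -/
open Finset

section Aux
variable {Ω : Type} [Fintype Ω]
variable {α β γ : Type} [Fintype α] [DecidableEq α] [Fintype β] [DecidableEq β]
  [Fintype γ] [DecidableEq γ]

lemma pm_nonneg {p : Ω → ℝ} (hp : ∀ ω, 0 ≤ p ω) (T : Ω → α) (a : α) : 0 ≤ pm p T a :=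
  Finset.sum_nonneg fun ω _ => by by_cases h : T ω = a <;> simp [h, hp ω]

lemma sum_pm_mul (p : Ω → ℝ) (T : Ω → α) (G : α → ℝ) :
    ∑ a, pm p T a * G a = ∑ ω, p ω * G (T ω) := by
  unfold pm
  simp only [Finset.sum_mul, ite_mul, zero_mul]
  rw [Finset.sum_comm]
  simp [Finset.sum_ite_eq]

lemma sum_pm (p : Ω → ℝ) (T : Ω → α) : ∑ a, pm p T a = ∑ ω, p ω := by
  have h := sum_pm_mul p T (fun _ => 1); simpa using h

lemma sum_comp_mul (p : Ω → ℝ) (T : Ω → α) (f : α → β) (G : β → ℝ) :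
    ∑ b, pm p (fun ω => f (T ω)) b * G b = ∑ a, pm p T a * G (f a) :=
  (sum_pm_mul p _ G).trans (sum_pm_mul p T (fun a => G (f a))).symm

lemma pm_comp_inj (p : Ω → ℝ) {T : Ω → α} {f : α → β} (hf : Function.Injective f) (a : α) :
    pm p (fun ω => f (T ω)) (f a) = pm p T a := by
  unfold pm; simp only [hf.eq_iff]

lemma pm_le_comp {p : Ω → ℝ} (hp : ∀ ω, 0 ≤ p ω) (T : Ω → α) (f : α → β) (a : α) :
    pm p T a ≤ pm p (fun ω => f (T ω)) (f a) := by
  unfold pm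
  apply Finset.sum_le_sum
  intro ω _
  split_ifs with h1 h2
  · exact le_rfl
  · exact absurd (congrArg f h1) h2
  · exact hp ω
  · exact le_rfl

lemma ent_comp_inj (p : Ω → ℝ) (T : Ω → α) {f : α → β} (hf : Function.Injective f) :
    ent p (fun ω => f (T ω)) = ent p T := by
  unfold ent
  congr 1
  rw [sum_comp_mul p T f (fun b => Real.logb 2 (pm p (fun ω => f (T ω)) b))]
  exact Finset.sum_congr rfl fun a _ => by rw [pm_comp_inj p hf]

lemma ent_comp_le {p : Ω → ℝ} (hp : ∀ ω, 0 ≤ p ω) (T : Ω → α) (f : α → β) :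
    ent p (fun ω => f (T ω)) ≤ ent p T := by
  unfold ent
  rw [neg_le_neg_iff, sum_comp_mul p T f (fun b => Real.logb 2 (pm p (fun ω => f (T ω)) b))]
  apply Finset.sum_le_sum
  intro a _
  rcases eq_or_lt_of_le (pm_nonneg hp T a) with h | h
  · rw [← h]; simp
  · exact mul_le_mul_of_nonneg_left
      (Real.logb_le_logb_of_le one_lt_two h (pm_le_comp hp T f a)) (le_of_lt h)

lemma sum_pm_mid (p : Ω → ℝ) (A : Ω → α) (B : Ω → β) (C : Ω → γ) (a : α) (c : γ) :
    ∑ b, pm p (fun ω => (A ω, B ω, C ω)) (a, b, c) = pm p (fun ω => (A ω, C ω)) (a, c) := by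
  unfold pm
  rw [Finset.sum_comm]
  apply Finset.sum_congr rfl
  intro ω _
  by_cases hA : A ω = a <;> by_cases hC : C ω = c <;>
    simp [Prod.ext_iff, hA, hC, Finset.sum_ite_eq]

lemma sum_pm_fst (p : Ω → ℝ) (A : Ω → α) (C : Ω → γ) (c : γ) :
    ∑ a, pm p (fun ω => (A ω, C ω)) (a, c) = pm p C c := by
  unfold pm
  rw [Finset.sum_comm]
  apply Finset.sum_congr rfl
  intro ω _
  by_cases hC : C ω = c <;> simp [Prod.ext_iff, hC, Finset.sum_ite_eq]

lemma gibbs {ι : Type} [Fintype ι] (f g : ι → ℝ) (hf : ∀ i, 0 ≤ f i) (hg : ∀ i, 0 ≤ g i)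
    (hac : ∀ i, 0 < f i → 0 < g i) (hsum : ∑ i, g i ≤ ∑ i, f i) :
    ∑ i, f i * Real.logb 2 (g i) ≤ ∑ i, f i * Real.logb 2 (f i) := by
  have hlog2 : (0:ℝ) < Real.log 2 := Real.log_pos one_lt_two
  have key : ∀ i, f i * Real.logb 2 (g i) ≤
      f i * Real.logb 2 (f i) + (g i - f i) / Real.log 2 := by
    intro i
    rcases eq_or_lt_of_le (hf i) with h | h
    · rw [← h]
      simp only [zero_mul, zero_add, sub_zero]
      exact div_nonneg (hg i) hlog2.le
    · have hgi := hac i h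
      have h1 : Real.log (g i / f i) ≤ g i / f i - 1 :=
        Real.log_le_sub_one_of_pos (div_pos hgi h)
      have h2 : f i * Real.log (g i / f i) ≤ g i - f i := by
        have h3 := mul_le_mul_of_nonneg_left h1 (le_of_lt h)
        have e : f i * (g i / f i - 1) = g i - f i := by field_simp
        linarith
      have e2 : f i * Real.logb 2 (g i) - f i * Real.logb 2 (f i)
          = (f i * Real.log (g i / f i)) / Real.log 2 := by
        rw [Real.log_div hgi.ne' h.ne']
        unfold Real.logb
        field_simp
      have h4 : (f i * Real.log (g i / f i)) / Real.log 2 ≤ (g i - f i) / Real.log 2 := by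
        exact div_le_div_of_nonneg_right h2 hlog2.le
      linarith
  calc ∑ i, f i * Real.logb 2 (g i)
      ≤ ∑ i, (f i * Real.logb 2 (f i) + (g i - f i) / Real.log 2) :=
        Finset.sum_le_sum fun i _ => key i
    _ = ∑ i, f i * Real.logb 2 (f i) + (∑ i, g i - ∑ i, f i) / Real.log 2 := by
        rw [Finset.sum_add_distrib, ← Finset.sum_div, Finset.sum_sub_distrib]
    _ ≤ ∑ i, f i * Real.logb 2 (f i) := by
        have : (∑ i, g i - ∑ i, f i) / Real.log 2 ≤ 0 :=
          div_nonpos_of_nonpos_of_nonneg (by linarith) (le_of_lt hlog2)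
        linarith

end Aux

section Aux2
variable {Ω : Type} [Fintype Ω]
variable {α β γ : Type} [Fintype α] [DecidableEq α] [Fintype β] [DecidableEq β]
  [Fintype γ] [DecidableEq γ]

lemma cmi_nonneg {p : Ω → ℝ} (hp : IsPMF p) (A : Ω → α) (B : Ω → β) (C : Ω → γ) :
    0 ≤ cmi p A B C := by
  obtain ⟨hnn, hs1⟩ := hp
  set T : Ω → α × β × γ := fun ω => (A ω, B ω, C ω) with hT
  set f : α × β × γ → ℝ := fun x => pm p T x with hfdef
  set g : α × β × γ → ℝ :=
    fun x => pm p (fun ω => (A ω, C ω)) (x.1, x.2.2) *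
      pm p (fun ω => (B ω, C ω)) x.2 / pm p C x.2.2 with hgdef
  have hfle1 : ∀ x : α × β × γ, f x ≤ pm p (fun ω => (A ω, C ω)) (x.1, x.2.2) := fun x =>
    pm_le_comp hnn T (fun y => (y.1, y.2.2)) x
  have hfle2 : ∀ x : α × β × γ, f x ≤ pm p (fun ω => (B ω, C ω)) x.2 := fun x =>
    pm_le_comp hnn T (fun y => y.2) x
  have hfle3 : ∀ x : α × β × γ, f x ≤ pm p C x.2.2 := fun x =>
    pm_le_comp hnn T (fun y => y.2.2) x
  have hf0 : ∀ x, 0 ≤ f x := fun x => pm_nonneg hnn T x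
  have hg0 : ∀ x, 0 ≤ g x := fun x =>
    div_nonneg (mul_nonneg (pm_nonneg hnn _ _) (pm_nonneg hnn _ _)) (pm_nonneg hnn _ _)
  have hac : ∀ x, 0 < f x → 0 < g x := fun x hx =>
    div_pos (mul_pos (lt_of_lt_of_le hx (hfle1 x)) (lt_of_lt_of_le hx (hfle2 x)))
      (lt_of_lt_of_le hx (hfle3 x))
  have hsumf : ∑ x, f x = 1 := by rw [hfdef]; rw [sum_pm p T]; exact hs1
  have hsumg : ∑ x, g x = 1 := by
    rw [hgdef]
    rw [Fintype.sum_prod_type]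
    simp only [Fintype.sum_prod_type]
    have step1 : ∀ a : α, (∑ b : β, ∑ c : γ,
        pm p (fun ω => (A ω, C ω)) (a, c) * pm p (fun ω => (B ω, C ω)) (b, c) / pm p C c)
        = ∑ c : γ, ∑ b : β,
        pm p (fun ω => (A ω, C ω)) (a, c) * pm p (fun ω => (B ω, C ω)) (b, c) / pm p C c :=
      fun a => Finset.sum_comm
    rw [Finset.sum_congr rfl (fun a _ => step1 a), Finset.sum_comm]
    have step2 : ∀ c : γ, (∑ a : α, ∑ b : β,
        pm p (fun ω => (A ω, C ω)) (a, c) * pm p (fun ω => (B ω, C ω)) (b, c) / pm p C c)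
        = pm p C c := by
      intro c
      have e1 : ∀ a : α, (∑ b : β,
          pm p (fun ω => (A ω, C ω)) (a, c) * pm p (fun ω => (B ω, C ω)) (b, c) / pm p C c)
          = pm p (fun ω => (A ω, C ω)) (a, c) * pm p C c / pm p C c := by
        intro a
        rw [← Finset.sum_div, ← Finset.mul_sum, sum_pm_fst p B C c]
      rw [Finset.sum_congr rfl (fun a _ => e1 a), ← Finset.sum_div, ← Finset.sum_mul,
        sum_pm_fst p A C c]
      by_cases h : pm p C c = 0
      · simp [h]
      · field_simp
    rw [Finset.sum_congr rfl (fun c _ => step2 c), sum_pm p C, hs1]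
  have hgibbs := gibbs f g hf0 hg0 hac (by rw [hsumf, hsumg])
  have hL : ∑ x, f x * Real.logb 2 (g x) =
      (∑ x : α × γ, pm p (fun ω => (A ω, C ω)) x * Real.logb 2 (pm p (fun ω => (A ω, C ω)) x))
      + (∑ x : β × γ, pm p (fun ω => (B ω, C ω)) x * Real.logb 2 (pm p (fun ω => (B ω, C ω)) x))
      - (∑ c, pm p C c * Real.logb 2 (pm p C c)) := by
    have e : ∀ x : α × β × γ, f x * Real.logb 2 (g x) =
        f x * Real.logb 2 (pm p (fun ω => (A ω, C ω)) (x.1, x.2.2))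
        + f x * Real.logb 2 (pm p (fun ω => (B ω, C ω)) x.2)
        - f x * Real.logb 2 (pm p C x.2.2) := by
      intro x
      rcases eq_or_lt_of_le (hf0 x) with h | h
      · rw [← h]; ring
      · have h1 := lt_of_lt_of_le h (hfle1 x)
        have h2 := lt_of_lt_of_le h (hfle2 x)
        have h3 := lt_of_lt_of_le h (hfle3 x)
        rw [hgdef]
        rw [Real.logb_div (mul_ne_zero h1.ne' h2.ne') h3.ne', Real.logb_mul h1.ne' h2.ne']
        ring
    rw [Finset.sum_congr rfl (fun x _ => e x), Finset.sum_sub_distrib, Finset.sum_add_distrib]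
    congr 1
    congr 1
    · exact (sum_comp_mul p T (fun y => (y.1, y.2.2))
        (fun y => Real.logb 2 (pm p (fun ω => (A ω, C ω)) y))).symm
    · exact (sum_comp_mul p T (fun y => y.2)
        (fun y => Real.logb 2 (pm p (fun ω => (B ω, C ω)) y))).symm
    · exact (sum_comp_mul p T (fun y => y.2.2)
        (fun y => Real.logb 2 (pm p C y))).symm
  unfold cmi ent
  rw [hL] at hgibbs
  have hR : ∑ x, f x * Real.logb 2 (f x) =
      ∑ x : α × β × γ, pm p (fun ω => (A ω, B ω, C ω)) x *
        Real.logb 2 (pm p (fun ω => (A ω, B ω, C ω)) x) := rfl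
  rw [hR] at hgibbs
  linarith

lemma cmi_eq_zero_of_condIndep {p : Ω → ℝ} (hp : IsPMF p) {A : Ω → α} {B : Ω → β}
    {W : Ω → γ} (h : CondIndep p A B W) : cmi p A B W = 0 := by
  obtain ⟨hnn, hs1⟩ := hp
  set T : Ω → α × β × γ := fun ω => (A ω, B ω, W ω) with hT
  have key : ∀ x : α × β × γ, pm p T x * Real.logb 2 (pm p T x)
      + pm p T x * Real.logb 2 (pm p W x.2.2)
      - pm p T x * Real.logb 2 (pm p (fun ω => (A ω, W ω)) (x.1, x.2.2))
      - pm p T x * Real.logb 2 (pm p (fun ω => (B ω, W ω)) x.2) = 0 := by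
    intro x
    rcases eq_or_lt_of_le (pm_nonneg hnn T x) with hz | hz
    · rw [← hz]; ring
    · have h1 : 0 < pm p (fun ω => (A ω, W ω)) (x.1, x.2.2) :=
        lt_of_lt_of_le hz (pm_le_comp hnn T (fun y => (y.1, y.2.2)) x)
      have h2 : 0 < pm p (fun ω => (B ω, W ω)) x.2 :=
        lt_of_lt_of_le hz (pm_le_comp hnn T (fun y => y.2) x)
      have h3 : 0 < pm p W x.2.2 :=
        lt_of_lt_of_le hz (pm_le_comp hnn T (fun y => y.2.2) x)
      have hx : pm p T x * pm p W x.2.2 =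
          pm p (fun ω => (A ω, W ω)) (x.1, x.2.2) * pm p (fun ω => (B ω, W ω)) x.2 :=
        h x.1 x.2.1 x.2.2
      have hlog := congrArg (Real.logb 2) hx
      rw [Real.logb_mul hz.ne' h3.ne', Real.logb_mul h1.ne' h2.ne'] at hlog
      nlinarith [hlog]
  have hsum0 := Finset.sum_eq_zero (fun x (_ : x ∈ Finset.univ) => key x)
  rw [show (∑ x : α × β × γ, (pm p T x * Real.logb 2 (pm p T x)
      + pm p T x * Real.logb 2 (pm p W x.2.2)
      - pm p T x * Real.logb 2 (pm p (fun ω => (A ω, W ω)) (x.1, x.2.2))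
      - pm p T x * Real.logb 2 (pm p (fun ω => (B ω, W ω)) x.2)))
      = (∑ x : α × β × γ, pm p T x * Real.logb 2 (pm p T x))
      + (∑ x : α × β × γ, pm p T x * Real.logb 2 (pm p W x.2.2))
      - (∑ x : α × β × γ, pm p T x * Real.logb 2 (pm p (fun ω => (A ω, W ω)) (x.1, x.2.2)))
      - (∑ x : α × β × γ, pm p T x * Real.logb 2 (pm p (fun ω => (B ω, W ω)) x.2)) from by
    rw [Finset.sum_sub_distrib, Finset.sum_sub_distrib, Finset.sum_add_distrib]] at hsum0
  have m1 := sum_comp_mul p T (fun y => y.2.2) (fun y => Real.logb 2 (pm p W y))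
  have m2 := sum_comp_mul p T (fun y => (y.1, y.2.2))
    (fun y => Real.logb 2 (pm p (fun ω => (A ω, W ω)) y))
  have m3 := sum_comp_mul p T (fun y => y.2)
    (fun y => Real.logb 2 (pm p (fun ω => (B ω, W ω)) y))
  unfold cmi ent
  rw [← m1, ← m2, ← m3] at hsum0
  linarith

lemma condEnt_le_logb_card {p : Ω → ℝ} (hp : IsPMF p) [Nonempty α] (S : Ω → α) (W : Ω → γ) :
    condEnt p S W ≤ Real.logb 2 (Fintype.card α) := by
  obtain ⟨hnn, hs1⟩ := hp
  have hn : (0:ℝ) < Fintype.card α := by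
    have := Fintype.card_pos (α := α); positivity
  set T : Ω → α × γ := fun ω => (S ω, W ω) with hT
  set f : α × γ → ℝ := fun x => pm p T x with hfdef
  set g : α × γ → ℝ := fun x => pm p W x.2 / Fintype.card α with hgdef
  have hf0 : ∀ x, 0 ≤ f x := fun x => pm_nonneg hnn T x
  have hg0 : ∀ x, 0 ≤ g x := fun x => div_nonneg (pm_nonneg hnn W x.2) hn.le
  have hfle : ∀ x : α × γ, f x ≤ pm p W x.2 := fun x => pm_le_comp hnn T (fun y => y.2) x
  have hac : ∀ x, 0 < f x → 0 < g x := fun x hx => div_pos (lt_of_lt_of_le hx (hfle x)) hn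
  have hsumf : ∑ x, f x = 1 := by rw [hfdef, sum_pm p T, hs1]
  have hsumg : ∑ x, g x = 1 := by
    rw [hgdef, Fintype.sum_prod_type]
    have e : ∀ a : α, (∑ c : γ, pm p W c / (Fintype.card α : ℝ)) = 1 / Fintype.card α := by
      intro a; rw [← Finset.sum_div, sum_pm p W, hs1]
    rw [Finset.sum_congr rfl (fun a _ => e a), Finset.sum_const, Finset.card_univ,
      nsmul_eq_mul]
    field_simp
  have hgibbs := gibbs f g hf0 hg0 hac (by rw [hsumf, hsumg])
  have hL : ∑ x, f x * Real.logb 2 (g x) =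
      (∑ c, pm p W c * Real.logb 2 (pm p W c)) - Real.logb 2 (Fintype.card α) := by
    have e : ∀ x : α × γ, f x * Real.logb 2 (g x) =
        f x * Real.logb 2 (pm p W x.2) - f x * Real.logb 2 (Fintype.card α) := by
      intro x
      rcases eq_or_lt_of_le (hf0 x) with hz | hz
      · rw [← hz]; ring
      · have h3 := lt_of_lt_of_le hz (hfle x)
        rw [hgdef, Real.logb_div h3.ne' hn.ne']
        ring
    rw [Finset.sum_congr rfl (fun x _ => e x), Finset.sum_sub_distrib]
    congr 1
    · exact (sum_comp_mul p T (fun y => y.2) (fun y => Real.logb 2 (pm p W y))).symm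
    · rw [← Finset.sum_mul, hsumf, one_mul]
  unfold condEnt ent
  rw [hL] at hgibbs
  have hR : ∑ x, f x * Real.logb 2 (f x) =
      ∑ x : α × γ, pm p (fun ω => (S ω, W ω)) x *
        Real.logb 2 (pm p (fun ω => (S ω, W ω)) x) := rfl
  rw [hR] at hgibbs
  linarith

end Aux2

section Main
variable {Ω : Type} [Fintype Ω]
variable {υ χ γ ζ : Type} [Fintype υ] [DecidableEq υ] [Fintype χ] [DecidableEq χ]
  [Fintype γ] [DecidableEq γ] [Fintype ζ] [DecidableEq ζ]

lemma condIndep_pair {p : Ω → ℝ} (hnn : ∀ ω, 0 ≤ p ω)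
    {U : Ω → υ} {X : Ω → χ} {Y : Ω → γ} {Z : Ω → ζ}
    (h : CondIndep p U (fun ω => (Y ω, Z ω)) X) :
    CondIndep p U Y (fun ω => (X ω, Z ω)) := by
  rintro u y ⟨x, z⟩
  have E1 : pm p (fun ω => (U ω, (Y ω, Z ω), X ω)) (u, (y, z), x) * pm p X x =
      pm p (fun ω => (U ω, X ω)) (u, x) *
        pm p (fun ω => ((Y ω, Z ω), X ω)) ((y, z), x) := h u (y, z) x
  -- relabel goal atoms into canonical atoms
  have r1 : pm p (fun ω => (U ω, Y ω, (X ω, Z ω))) (u, y, (x, z)) =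
      pm p (fun ω => (U ω, (Y ω, Z ω), X ω)) (u, (y, z), x) :=
    pm_comp_inj p (T := fun ω => (U ω, (Y ω, Z ω), X ω))
      (f := fun a => (a.1, a.2.1.1, (a.2.2, a.2.1.2)))
      (by intro a b hab; simp only [Prod.ext_iff] at hab ⊢; tauto) (u, (y, z), x)
  have rA : pm p (fun ω => (U ω, (X ω, Z ω))) (u, (x, z)) =
      pm p (fun ω => (U ω, (Z ω, X ω))) (u, (z, x)) :=
    pm_comp_inj p (T := fun ω => (U ω, (Z ω, X ω)))
      (f := fun a => (a.1, (a.2.2, a.2.1)))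
      (by intro a b hab; simp only [Prod.ext_iff] at hab ⊢; tauto) (u, (z, x))
  have rB : pm p (fun ω => (X ω, Z ω)) (x, z) =
      pm p (fun ω => (Z ω, X ω)) (z, x) :=
    pm_comp_inj p (T := fun ω => (Z ω, X ω)) (f := fun a => (a.2, a.1))
      (by intro a b hab; simp only [Prod.ext_iff] at hab ⊢; tauto) (z, x)
  have rC : pm p (fun ω => (Y ω, (X ω, Z ω))) (y, (x, z)) =
      pm p (fun ω => ((Y ω, Z ω), X ω)) ((y, z), x) :=
    pm_comp_inj p (T := fun ω => ((Y ω, Z ω), X ω))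
      (f := fun a => (a.1.1, (a.2, a.1.2)))
      (by intro a b hab; simp only [Prod.ext_iff] at hab ⊢; tauto) ((y, z), x)
  -- summed version of E1 over the Y-coordinate
  have E2 : pm p (fun ω => (U ω, (Z ω, X ω))) (u, (z, x)) * pm p X x =
      pm p (fun ω => (U ω, X ω)) (u, x) * pm p (fun ω => (Z ω, X ω)) (z, x) := by
    have rs1 : ∀ y' : γ, pm p (fun ω => (U ω, (Y ω, Z ω), X ω)) (u, (y', z), x) =
        pm p (fun ω => (U ω, Y ω, (Z ω, X ω))) (u, y', (z, x)) := fun y' =>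
      pm_comp_inj p (T := fun ω => (U ω, Y ω, (Z ω, X ω)))
        (f := fun a => (a.1, (a.2.1, a.2.2.1), a.2.2.2))
        (by intro a b hab; simp only [Prod.ext_iff] at hab ⊢; tauto) (u, y', (z, x))
    have rs2 : ∀ y' : γ, pm p (fun ω => ((Y ω, Z ω), X ω)) ((y', z), x) =
        pm p (fun ω => (Y ω, (Z ω, X ω))) (y', (z, x)) := fun y' =>
      pm_comp_inj p (T := fun ω => (Y ω, (Z ω, X ω)))
        (f := fun a => ((a.1, a.2.1), a.2.2))
        (by intro a b hab; simp only [Prod.ext_iff] at hab ⊢; tauto) (y', (z, x))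
    have hsum := Finset.sum_congr rfl (fun y' (_ : y' ∈ Finset.univ) => h u (y', z) x)
    rw [← Finset.sum_mul, ← Finset.mul_sum] at hsum
    rw [Finset.sum_congr rfl (fun y' _ => rs1 y'),
      sum_pm_mid p U Y (fun ω => (Z ω, X ω)) u (z, x)] at hsum
    rw [Finset.sum_congr rfl (fun y' _ => rs2 y'),
      sum_pm_fst p Y (fun ω => (Z ω, X ω)) (z, x)] at hsum
    exact hsum
  rw [r1, rA, rB, rC]
  rcases eq_or_lt_of_le (pm_nonneg hnn X x) with hx | hx
  · have hle1 : pm p (fun ω => (U ω, (Y ω, Z ω), X ω)) (u, (y, z), x) ≤ pm p X x :=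
      pm_le_comp hnn (fun ω => (U ω, (Y ω, Z ω), X ω)) (fun a => a.2.2) (u, (y, z), x)
    have hle2 : pm p (fun ω => ((Y ω, Z ω), X ω)) ((y, z), x) ≤ pm p X x :=
      pm_le_comp hnn (fun ω => ((Y ω, Z ω), X ω)) (fun a => a.2) ((y, z), x)
    have z1 : pm p (fun ω => (U ω, (Y ω, Z ω), X ω)) (u, (y, z), x) = 0 :=
      le_antisymm (hx ▸ hle1) (pm_nonneg hnn _ _)
    have z2 : pm p (fun ω => ((Y ω, Z ω), X ω)) ((y, z), x) = 0 :=
      le_antisymm (hx ▸ hle2) (pm_nonneg hnn _ _)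
    rw [z1, z2]; ring
  · have key : pm p (fun ω => (U ω, (Y ω, Z ω), X ω)) (u, (y, z), x) *
        pm p (fun ω => (Z ω, X ω)) (z, x) * pm p X x =
        pm p (fun ω => (U ω, (Z ω, X ω))) (u, (z, x)) *
        pm p (fun ω => ((Y ω, Z ω), X ω)) ((y, z), x) * pm p X x := by
      linear_combination pm p (fun ω => (Z ω, X ω)) (z, x) * E1 -
        pm p (fun ω => ((Y ω, Z ω), X ω)) ((y, z), x) * E2
    exact mul_right_cancel₀ hx.ne' key

end Main


/-- secrecy converse core inequality. If `U → X → Y → Z` is a Markov chain,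
`S` takes values in a set of size `q_d`, and `H(U | Y,Z,S) ≤ Δ`, then
`H(U) − I(U;Z) ≤ I(X;Y|Z) + log₂ q_d + Δ`. -/
theorem stmt8 {Ω υ χ γ ζ σ : Type} [Fintype Ω] [Fintype υ] [DecidableEq υ]
    [Fintype χ] [DecidableEq χ] [Fintype γ] [DecidableEq γ] [Fintype ζ] [DecidableEq ζ]
    [Fintype σ] [DecidableEq σ]
    (p : Ω → ℝ) (hp : IsPMF p) (qd : ℕ) (hq : Fintype.card σ = qd)
    (U : Ω → υ) (X : Ω → χ) (Y : Ω → γ) (Z : Ω → ζ) (S : Ω → σ) (Δ : ℝ)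
    (hMarkov1 : CondIndep p U (fun ω => (Y ω, Z ω)) X)
    (hMarkov2 : CondIndep p (fun ω => (U ω, X ω)) Z Y)
    (hFano : condEnt p U (fun ω => (Y ω, Z ω, S ω)) ≤ Δ) :
    ent p U - mi p U Z ≤ cmi p X Y Z + Real.logb 2 qd + Δ := by
  obtain ⟨hnn, hs1⟩ := hp
  -- the goal, with mi and cmi unfolded
  show ent p U - (ent p U + ent p Z - ent p (fun ω => (U ω, Z ω))) ≤
    (ent p (fun ω => (X ω, Z ω)) + ent p (fun ω => (Y ω, Z ω))
      - ent p (fun ω => (X ω, Y ω, Z ω)) - ent p Z) + Real.logb 2 qd + Δ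
  -- nonemptiness of σ
  have hΩ : Nonempty Ω := by
    by_contra hcon
    rw [not_nonempty_iff] at hcon
    rw [Finset.univ_eq_empty, Finset.sum_empty] at hs1
    exact zero_ne_one hs1
  have hσ : Nonempty σ := ⟨S (Classical.arbitrary Ω)⟩
  -- Step A: data processing  I(U;Y|Z) ≤ I(X;Y|Z)
  have hCI : CondIndep p U Y (fun ω => (X ω, Z ω)) := condIndep_pair hnn hMarkov1
  have h0 : ent p (fun ω => (U ω, (X ω, Z ω))) + ent p (fun ω => (Y ω, (X ω, Z ω)))
      - ent p (fun ω => (U ω, Y ω, (X ω, Z ω))) - ent p (fun ω => (X ω, Z ω)) = 0 :=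
    cmi_eq_zero_of_condIndep ⟨hnn, hs1⟩ hCI
  have h3 : 0 ≤ ent p (fun ω => (X ω, (U ω, Z ω))) + ent p (fun ω => (Y ω, (U ω, Z ω)))
      - ent p (fun ω => (X ω, Y ω, (U ω, Z ω))) - ent p (fun ω => (U ω, Z ω)) :=
    cmi_nonneg ⟨hnn, hs1⟩ X Y (fun ω => (U ω, Z ω))
  have r1 : ent p (fun ω => (U ω, (X ω, Z ω))) = ent p (fun ω => (X ω, (U ω, Z ω))) := by
    rw [ent_comp_inj p (T := fun ω => (X ω, (U ω, Z ω)))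
      (f := fun a => (a.2.1, (a.1, a.2.2))) (by intro a b hab; simp only [Prod.ext_iff] at hab ⊢; tauto)]
  have r2 : ent p (fun ω => (U ω, Y ω, (X ω, Z ω)))
      = ent p (fun ω => (X ω, Y ω, (U ω, Z ω))) := by
    rw [ent_comp_inj p (T := fun ω => (X ω, Y ω, (U ω, Z ω)))
      (f := fun a => (a.2.2.1, (a.2.1, (a.1, a.2.2.2)))) (by intro a b hab; simp only [Prod.ext_iff] at hab ⊢; tauto)]
  have r3 : ent p (fun ω => (Y ω, (X ω, Z ω))) = ent p (fun ω => (X ω, Y ω, Z ω)) := by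
    rw [ent_comp_inj p (T := fun ω => (X ω, Y ω, Z ω))
      (f := fun a => (a.2.1, (a.1, a.2.2))) (by intro a b hab; simp only [Prod.ext_iff] at hab ⊢; tauto)]
  have r4 : ent p (fun ω => (Y ω, (U ω, Z ω))) = ent p (fun ω => (U ω, Y ω, Z ω)) := by
    rw [ent_comp_inj p (T := fun ω => (U ω, Y ω, Z ω))
      (f := fun a => (a.2.1, (a.1, a.2.2))) (by intro a b hab; simp only [Prod.ext_iff] at hab ⊢; tauto)]
  -- Step B: Fano term, relabeled
  have hFano' : ent p (fun ω => (U ω, Y ω, Z ω, S ω)) - ent p (fun ω => (Y ω, Z ω, S ω)) ≤ Δ :=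
    hFano
  have rF1 : ent p (fun ω => (U ω, S ω, Y ω, Z ω))
      = ent p (fun ω => (U ω, Y ω, Z ω, S ω)) := by
    rw [ent_comp_inj p (T := fun ω => (U ω, Y ω, Z ω, S ω))
      (f := fun a => (a.1, (a.2.2.2, (a.2.1, a.2.2.1)))) (by intro a b hab; simp only [Prod.ext_iff] at hab ⊢; tauto)]
  have rF2 : ent p (fun ω => (S ω, Y ω, Z ω)) = ent p (fun ω => (Y ω, Z ω, S ω)) := by
    rw [ent_comp_inj p (T := fun ω => (Y ω, Z ω, S ω))
      (f := fun a => (a.2.2, (a.1, a.2.1))) (by intro a b hab; simp only [Prod.ext_iff] at hab ⊢; tauto)]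
  -- Step C: H(U|Y,Z) ≤ H(U|Y,Z,S) + I(U;S|Y,Z) with I(U;S|Y,Z) ≤ H(S|Y,Z) ≤ log qd
  have hmono : ent p (fun ω => (U ω, Y ω, Z ω)) ≤ ent p (fun ω => (U ω, S ω, Y ω, Z ω)) :=
    ent_comp_le hnn (fun ω => (U ω, S ω, Y ω, Z ω)) (fun a => (a.1, a.2.2))
  have hcard : ent p (fun ω => (S ω, Y ω, Z ω)) - ent p (fun ω => (Y ω, Z ω))
      ≤ Real.logb 2 (Fintype.card σ) :=
    condEnt_le_logb_card ⟨hnn, hs1⟩ S (fun ω => (Y ω, Z ω))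
  rw [hq] at hcard
  linarith
end
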